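/- Let X_{(Q)} be the quantum Laurent series algebra in |Q_0| variables with multiplication x^β x^γ = q^{-(β,γ)/2} x^{β+γ}, where (−,−) is the antisymmetrized Euler form of Q. Then the map ∫: H(Q) → X_{(Q)} sending an isomorphism class [M] of dimension vector α to q^{⟨α,α⟩/2} x^α / a_M, where a_M = |Aut_Q(M)| and ⟨−,−⟩ is the Euler form, is an algebra homomorphism. -/

import Mathlib

namespace QP

structure FQuiver where
  V : Type
  E : Type
  [fV : Fintype V]
  [fE : Fintype E]
  [dV : DecidableEq V]
  [dE : DecidableEq E]
  src : E → V
  tgt : E → V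

attribute [instance] FQuiver.fV FQuiver.fE FQuiver.dV FQuiver.dE

variable (Q : FQuiver) (K : Type) [Field K] [Fintype K]

/-- A finite-dimensional representation of the quiver `Q` over `K`. -/
structure Rep where
  d : Q.V → ℕ
  m : ∀ e : Q.E, (Fin (d (Q.src e)) → K) →ₗ[K] (Fin (d (Q.tgt e)) → K)

variable {Q K}

/-- Morphisms of representations. -/
structure Hom (M N : Rep Q K) where
  f : ∀ v, (Fin (M.d v) → K) →ₗ[K] (Fin (N.d v) → K)
  comm : ∀ e, (f (Q.tgt e)).comp (M.m e) = (N.m e).comp (f (Q.src e))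

def Hom.IsIso {M N : Rep Q K} (φ : Hom M N) : Prop := ∀ v, Function.Bijective (φ.f v)

/-- Isomorphism of representations. -/
def repIso (M N : Rep Q K) : Prop := ∃ φ : Hom M N, φ.IsIso

/-- The number of automorphisms `a_M = |Aut(M)|`. -/
noncomputable def aut (M : Rep Q K) : ℕ := Nat.card {φ : Hom M M // φ.IsIso}

/-- `ι, π` form a short exact sequence `0 → V' → W → U → 0`. -/
def IsExactPair {V' W U : Rep Q K} (ι : Hom V' W) (π : Hom W U) : Prop :=
  ∀ v, Function.Injective (ι.f v) ∧ Function.Surjective (π.f v) ∧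
    LinearMap.range (ι.f v) = LinearMap.ker (π.f v)

/-- Number of exact pairs `0 → V' → W → U → 0`; equals `F^W_{U V'} · a_U · a_{V'}`. -/
noncomputable def epairs (U V' W : Rep Q K) : ℕ :=
  Nat.card {p : Hom V' W × Hom W U // IsExactPair p.1 p.2}

variable (Q K) in
/-- Representations with a fixed dimension vector. -/
def RepOf (d : Q.V → ℕ) := ∀ e : Q.E, (Fin (d (Q.src e)) → K) →ₗ[K] (Fin (d (Q.tgt e)) → K)

def RepOf.toRep {d : Q.V → ℕ} (m : RepOf Q K d) : Rep Q K := ⟨d, m⟩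

variable (Q K) in
/-- `|GL_d| = ∏_v |GL_{d v}(K)|`. -/
noncomputable def glcard (d : Q.V → ℕ) : ℕ :=
  ∏ v : Q.V, Nat.card ((Fin (d v) → K) ≃ₗ[K] (Fin (d v) → K))

/-- A Hall-algebra element constant on isomorphism classes. -/
def IsoInvariant (h : Rep Q K → ℚ) : Prop := ∀ M N, repIso M N → h M = h N

/-- The Hall product.  For iso-invariant `h₁ h₂` this computes
`([U][V] = ∑_W F^W_{UV}[W])`-multiplication, coefficientwise:
`(h₁ * h₂)(W) = ∑_{[U],[V]} h₁(U) h₂(V) F^W_{UV}`, using that the number of exact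
pairs is `F^W_{UV} a_U a_V` and that each iso class of dimension `δ` has
`glcard δ / a` objects. -/
noncomputable def hmul (h₁ h₂ : Rep Q K → ℚ) : Rep Q K → ℚ := fun W =>
  ∑ᶠ (δ : Q.V → ℕ) (_ : ∀ v, δ v ≤ W.d v) (mV : RepOf Q K δ)
      (mU : RepOf Q K fun v => W.d v - δ v),
    h₁ mU.toRep * h₂ mV.toRep * (epairs mU.toRep mV.toRep W : ℚ) /
      ((glcard Q K δ : ℚ) * (glcard Q K fun v => W.d v - δ v))

/-- The unit `[0]` of the Hall algebra. -/
noncomputable def hone : Rep Q K → ℚ := fun W => if W.d = fun _ => 0 then 1 else 0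

open Classical in
/-- `χ(𝒞) = ∑_{M ∈ 𝒞} [M]` for a (iso-closed) subcategory cut out by `P`. -/
noncomputable def chi (P : Rep Q K → Prop) : Rep Q K → ℚ := fun M => if P M then 1 else 0

end QP

namespace QP

variable (Q : FQuiver) {K : Type} [Field K] [Fintype K]

/-- The Euler form `⟨α,β⟩ = ∑_v α_v β_v − ∑_{a ∈ Q₁} α_{ta} β_{ha}` of `Q`. -/
def eform (α β : Q.V → ℕ) : ℤ :=
  (∑ v, (α v : ℤ) * β v) - ∑ e : Q.E, (α (Q.src e) : ℤ) * β (Q.tgt e)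

/-- The antisymmetrized Euler form `(α,β) = ⟨α,β⟩ − ⟨β,α⟩`. -/
def aform (α β : Q.V → ℕ) : ℤ := eform Q α β - eform Q β α

/-- The quantum (Laurent) series algebra `X_{(Q)}`: formal series `∑ c_α x^α` with
real coefficients (so that `q^{1/2} = √q` makes sense). -/
def QX := (Q.V → ℕ) → ℝ

variable (K) in
/-- `q^{1/2} = √|K|`. -/
noncomputable def sq : ℝ := Real.sqrt (Fintype.card K)

variable (K) in
/-- Multiplication in `X_{(Q)}`, determined by `x^β x^γ = q^{-(β,γ)/2} x^{β+γ}`. -/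
noncomputable def qmul (x y : QX Q) : QX Q := fun α =>
  ∑ᶠ (β : Q.V → ℕ) (_ : ∀ v, β v ≤ α v),
    sq K ^ (-(aform Q β (α - β))) * x β * y (α - β)

/-- The unit of `X_{(Q)}`. -/
noncomputable def qone : QX Q := fun α => if α = 0 then 1 else 0

/-- The integration map `∫ : H(Q) → X_{(Q)}`, `[M] ↦ q^{⟨α,α⟩/2} x^α / a_M`:
as a function on iso-invariant series it is
`(∫ h)(α) = q^{⟨α,α⟩/2} ∑_{[M], dim M = α} h(M)/a_M = q^{⟨α,α⟩/2} ∑_{M ∈ RepOf α} h(M)/|GL_α|`. -/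
noncomputable def intmap (h : Rep Q K → ℚ) : QX Q := fun α =>
  sq K ^ eform Q α α * ∑ᶠ m : RepOf Q K α, (h m.toRep : ℝ) / (glcard Q K α : ℝ)

end QP


/-! Because `hmul` and `intmap` sum over all representations of given dimension vectors, each
weighted by `1 / |GL|`, the theorem reduces to one count: for fixed `V` of dimension `δ` and `U`
of dimension `α - δ`, the pairs of a representation `W` of dimension `α` and an exact pair
`0 → V → W → U → 0` number `|GL_α| q^{-⟨α-δ,δ⟩}` (the Riedtmann formula summed over `W`).
Such data are a short exact sequence of vector spaces at every vertex together with edge maps of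
`W` compatible with them. A short exact sequence with a chosen section is the same as a splitting
`K^{α_v} ≃ K^{δ_v} × K^{α_v-δ_v}`, and every sequence has `q^{(α_v-δ_v) δ_v}` sections; in split
coordinates the compatible edge maps are the block upper triangular matrices with the edge maps of
`V` and `U` on the diagonal. The powers of `q^{1/2}` then match by
`⟨α,α⟩ - 2⟨α-δ,δ⟩ = ⟨α-δ,α-δ⟩ + ⟨δ,δ⟩ - (α-δ,δ)`. -/

theorem Nat.card_sigma_of_card_eq {ι : Type*} {β : ι → Type*} [Finite ι] [∀ i, Finite (β i)]
    {c : ℕ} (h : ∀ i, Nat.card (β i) = c) : Nat.card (Σ i, β i) = Nat.card ι * c := by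
  have := Fintype.ofFinite ι
  rw [Nat.card_sigma, Finset.sum_congr rfl fun i _ => h i, Finset.sum_const, Finset.card_univ,
    smul_eq_mul, Nat.card_eq_fintype_card]

namespace LinearMap

section Semiring

variable {R M N P M₂ P₂ : Type*} [Semiring R] [AddCommMonoid M] [AddCommMonoid N]
  [AddCommMonoid P] [AddCommMonoid M₂] [AddCommMonoid P₂] [Module R M] [Module R N] [Module R P]
  [Module R M₂] [Module R P₂]

instance [Finite M] [Finite N] : Finite (M →ₗ[R] N) :=
  Finite.of_injective _ DFunLike.coe_injective

instance [Finite M] [Finite N] : Finite (M ≃ₗ[R] N) :=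
  Finite.of_injective _ LinearEquiv.toLinearMap_injective

def sndSectionsEquiv :
    {l : P →ₗ[R] M × P // snd R M P ∘ₗ l = id} ≃ (P →ₗ[R] M) where
  toFun l := fst R M P ∘ₗ l.1
  invFun φ := ⟨φ.prod id, by ext; simp⟩
  left_inv l := Subtype.ext <| LinearMap.ext fun x => Prod.ext rfl (LinearMap.congr_fun l.2 x).symm
  right_inv _ := rfl

def upperTriangularEquiv (a : M →ₗ[R] M₂) (c : P →ₗ[R] P₂) :
    {w : M × P →ₗ[R] M₂ × P₂ // w ∘ₗ inl R M P = inl R M₂ P₂ ∘ₗ a ∧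
      snd R M₂ P₂ ∘ₗ w = c ∘ₗ snd R M P} ≃ (P →ₗ[R] M₂) where
  toFun w := fst R M₂ P₂ ∘ₗ w.1 ∘ₗ inr R M P
  invFun b := ⟨a.prodMap c + inl R M₂ P₂ ∘ₗ b ∘ₗ snd R M P, by ext <;> simp, by ext <;> simp⟩
  left_inv := by
    rintro ⟨w, h₁, h₂⟩
    refine Subtype.ext (prod_ext (Eq.trans ?_ h₁.symm) ?_)
    · ext <;> simp [Prod.mk_zero_zero]
    · ext x
      · simp
      · simpa using (LinearMap.congr_fun h₂ (0, x)).symm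
  right_inv b := by ext; simp

end Semiring

section Field

variable {K M N P M₂ N₂ P₂ : Type*} [Field K] [AddCommGroup M] [AddCommGroup N] [AddCommGroup P]
  [AddCommGroup M₂] [AddCommGroup N₂] [AddCommGroup P₂] [Module K M] [Module K N] [Module K P]
  [Module K M₂] [Module K N₂] [Module K P₂]

def IsShortExact (f : M →ₗ[K] N) (g : N →ₗ[K] P) : Prop :=
  Function.Injective f ∧ Function.Surjective g ∧ range f = ker g

abbrev ShortExactPairs (K M N P : Type*) [Field K] [AddCommGroup M] [AddCommGroup N]
    [AddCommGroup P] [Module K M] [Module K N] [Module K P] :=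
  {p : (M →ₗ[K] N) × (N →ₗ[K] P) // IsShortExact p.1 p.2}

theorem isShortExact_of_linearEquiv (e : N ≃ₗ[K] M × P) :
    IsShortExact (e.symm.toLinearMap ∘ₗ inl K M P) (snd K M P ∘ₗ e.toLinearMap) := by
  refine ⟨e.symm.injective.comp (inl_injective (R := K) (M₂ := P)),
    (snd_surjective (R := K) (M := M)).comp e.surjective, ?_⟩
  ext x
  constructor
  · rintro ⟨y, rfl⟩
    simp
  · intro hx
    refine ⟨(e x).1, e.symm_apply_eq.2 (Prod.ext rfl ?_)⟩
    simpa using hx.symm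

theorem IsShortExact.exists_linearEquiv {f : M →ₗ[K] N} {g : N →ₗ[K] P}
    (h : IsShortExact f g) :
    ∃ e : N ≃ₗ[K] M × P, f = e.symm.toLinearMap ∘ₗ inl K M P ∧ g = snd K M P ∘ₗ e.toLinearMap := by
  obtain ⟨l, hl⟩ := g.exists_rightInverse_of_surjective (range_eq_top.2 h.2.1)
  exact ⟨_, ((exact_iff.2 h.2.2.symm).splitSurjectiveEquiv h.1 ⟨l, hl⟩).2⟩

theorem IsShortExact.card_sections {f : M →ₗ[K] N} {g : N →ₗ[K] P} (h : IsShortExact f g) :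
    Nat.card {l : P →ₗ[K] N // g ∘ₗ l = id} = Nat.card (P →ₗ[K] M) := by
  obtain ⟨e, -, rfl⟩ := h.exists_linearEquiv
  rw [← Nat.card_congr sndSectionsEquiv]
  exact Nat.card_congr <| e.congrRight.toEquiv.subtypeEquiv fun l => by
    rw [comp_assoc]
    rfl

theorem IsShortExact.card_compatible {f : M →ₗ[K] N} {g : N →ₗ[K] P}
    {f₂ : M₂ →ₗ[K] N₂} {g₂ : N₂ →ₗ[K] P₂} (h : IsShortExact f g) (h₂ : IsShortExact f₂ g₂)
    (a : M →ₗ[K] M₂) (c : P →ₗ[K] P₂) :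
    Nat.card {w : N →ₗ[K] N₂ // w ∘ₗ f = f₂ ∘ₗ a ∧ g₂ ∘ₗ w = c ∘ₗ g} =
      Nat.card (P →ₗ[K] M₂) := by
  obtain ⟨e, rfl, rfl⟩ := h.exists_linearEquiv
  obtain ⟨e₂, rfl, rfl⟩ := h₂.exists_linearEquiv
  rw [← Nat.card_congr (upperTriangularEquiv a c)]
  refine Nat.card_congr <| (e.arrowCongr e₂).toEquiv.subtypeEquiv fun w => ?_
  simp only [LinearMap.ext_iff]
  refine and_congr (forall_congr' fun x => ?_) ?_
  · simp [LinearEquiv.eq_symm_apply]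
  · rw [← e.symm.toEquiv.forall_congr_right]
    simp

noncomputable def sigmaSectionsEquiv :
    (Σ p : ShortExactPairs K M N P, {l : P →ₗ[K] N // p.1.2 ∘ₗ l = id}) ≃ (N ≃ₗ[K] M × P) :=
  (Equiv.sigmaCongrRight fun p =>
      ((exact_iff.2 p.2.2.2.symm).splitSurjectiveEquiv p.2.1).trans <|
        Equiv.subtypeEquivRight fun e => by rw [Prod.ext_iff, eq_comm, @eq_comm _ p.1.2]).trans <|
    Equiv.sigmaSubtypeFiberEquiv (fun e : N ≃ₗ[K] M × P =>
      (e.symm.toLinearMap ∘ₗ inl K M P, snd K M P ∘ₗ e.toLinearMap)) _ isShortExact_of_linearEquiv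

theorem card_shortExactPairs_mul [Finite M] [Finite N] [Finite P] :
    Nat.card (ShortExactPairs K M N P) * Nat.card (P →ₗ[K] M) = Nat.card (N ≃ₗ[K] M × P) := by
  rw [← Nat.card_congr sigmaSectionsEquiv, Nat.card_sigma_of_card_eq fun p => p.2.card_sections]

end Field

section Coordinates

variable {K : Type*} [Field K]

theorem natCard_fin (n m : ℕ) :
    Nat.card ((Fin n → K) →ₗ[K] (Fin m → K)) = Nat.card K ^ (n * m) := by
  rw [Module.natCard_eq_pow_finrank (K := K), Module.finrank_linearMap, Module.finrank_fin_fun,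
    Module.finrank_fin_fun]

theorem natCard_linearEquiv_prod_fin {d n : ℕ} (h : d ≤ n) :
    Nat.card ((Fin n → K) ≃ₗ[K] (Fin d → K) × (Fin (n - d) → K)) =
      Nat.card ((Fin n → K) ≃ₗ[K] (Fin n → K)) := by
  let s := LinearEquiv.ofFinrankEq (R := K) ((Fin d → K) × (Fin (n - d) → K)) (Fin n → K)
    (by simp [Module.finrank_prod]; omega)
  exact Nat.card_congr ⟨(·.trans s), (·.trans s.symm), fun φ => LinearEquiv.ext fun x => by simp,
    fun φ => LinearEquiv.ext fun x => by simp⟩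

theorem card_shortExactPairs_fin_mul [Finite K] {d n : ℕ} (h : d ≤ n) :
    Nat.card (ShortExactPairs K (Fin d → K) (Fin n → K) (Fin (n - d) → K)) *
        Nat.card K ^ ((n - d) * d) = Nat.card ((Fin n → K) ≃ₗ[K] (Fin n → K)) := by
  rw [← natCard_fin, card_shortExactPairs_mul, natCard_linearEquiv_prod_fin h]

end Coordinates

end LinearMap

namespace QP

open LinearMap

section Counting

variable {Q : FQuiver} {K : Type} [Field K] [Fintype K]

instance (d : Q.V → ℕ) : Finite (RepOf Q K d) := by
  unfold RepOf
  infer_instance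

noncomputable instance (d : Q.V → ℕ) : Fintype (RepOf Q K d) := Fintype.ofFinite _

instance (M N : Rep Q K) : Finite (Hom M N) :=
  Finite.of_injective Hom.f fun φ ψ h => by cases φ; cases ψ; congr

variable {α δ : Q.V → ℕ}

def sigmaExactPairsEquiv (mV : RepOf Q K δ) (mU : RepOf Q K fun v => α v - δ v) :
    (Σ mW : RepOf Q K α,
        {p : Hom mV.toRep mW.toRep × Hom mW.toRep mU.toRep // IsExactPair p.1 p.2}) ≃
      Σ P : (∀ v, ShortExactPairs K (Fin (δ v) → K) (Fin (α v) → K) (Fin (α v - δ v) → K)),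
        ∀ e, {w : (Fin (α (Q.src e)) → K) →ₗ[K] (Fin (α (Q.tgt e)) → K) //
          w ∘ₗ (P (Q.src e)).1.1 = (P (Q.tgt e)).1.1 ∘ₗ mV e ∧
            (P (Q.tgt e)).1.2 ∘ₗ w = mU e ∘ₗ (P (Q.src e)).1.2} where
  toFun t := ⟨fun v => ⟨(t.2.1.1.f v, t.2.1.2.f v), t.2.2 v⟩,
    fun e => ⟨t.1 e, (t.2.1.1.comm e).symm, t.2.1.2.comm e⟩⟩
  invFun x := ⟨fun e => (x.2 e).1,
    ⟨(⟨fun v => (x.1 v).1.1, fun e => (x.2 e).2.1.symm⟩,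
      ⟨fun v => (x.1 v).1.2, fun e => (x.2 e).2.2⟩), fun v => (x.1 v).2⟩⟩
  left_inv _ := rfl
  right_inv _ := rfl

theorem card_sigma_exactPairs_mul (hδ : δ ≤ α) (mV : RepOf Q K δ)
    (mU : RepOf Q K fun v => α v - δ v) :
    Nat.card (Σ mW : RepOf Q K α,
        {p : Hom mV.toRep mW.toRep × Hom mW.toRep mU.toRep // IsExactPair p.1 p.2}) *
        Nat.card K ^ ∑ v, (α v - δ v) * δ v =
      glcard Q K α * Nat.card K ^ ∑ e : Q.E, (α (Q.src e) - δ (Q.src e)) * δ (Q.tgt e) := by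
  rw [Nat.card_congr (sigmaExactPairsEquiv mV mU), Nat.card_sigma_of_card_eq
    (c := Nat.card K ^ ∑ e : Q.E, (α (Q.src e) - δ (Q.src e)) * δ (Q.tgt e)) fun P => ?_]
  · rw [Nat.card_pi, mul_right_comm, ← Finset.prod_pow_eq_pow_sum, ← Finset.prod_mul_distrib,
      glcard]
    simp_rw [card_shortExactPairs_fin_mul (hδ _)]
  · rw [Nat.card_pi, ← Finset.prod_pow_eq_pow_sum]
    simp_rw [(P (Q.src _)).2.card_compatible (P (Q.tgt _)).2, natCard_fin]

theorem glcard_pos (d : Q.V → ℕ) : 0 < glcard Q K d :=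
  Finset.prod_pos fun _ _ => Nat.card_pos

end Counting

section Exponents

variable {Q : FQuiver} {K : Type} [Fintype K]

theorem eform_add_add (β γ : Q.V → ℕ) :
    eform Q (β + γ) (β + γ) = eform Q β β + eform Q γ γ + eform Q β γ + eform Q γ β := by
  simp only [eform, Pi.add_apply, Nat.cast_add, add_mul, mul_add, Finset.sum_add_distrib]
  ring

theorem sq_zpow_two_mul (n : ℤ) : sq K ^ (2 * n) = (Fintype.card K : ℝ) ^ n := by
  rw [zpow_mul, sq, zpow_two, Real.mul_self_sqrt (Nat.cast_nonneg _)]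

theorem finsum_le_eq_sum_Iic {M : Type*} [AddCommMonoid M] (α : Q.V → ℕ) (F : (Q.V → ℕ) → M) :
    ∑ᶠ (δ : Q.V → ℕ) (_ : ∀ v, δ v ≤ α v), F δ = ∑ δ ∈ Finset.Iic α, F δ :=
  finsum_cond_eq_sum_of_cond_iff F fun _ => by rw [Finset.mem_Iic, Pi.le_def]

theorem qmul_apply (x y : QX Q) (α : Q.V → ℕ) :
    qmul Q K x y α = ∑ β ∈ Finset.Iic α, sq K ^ (-aform Q β (α - β)) * x β * y (α - β) :=
  finsum_le_eq_sum_Iic α _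

end Exponents

section Integration

variable {Q : FQuiver} {K : Type} [Field K] [Fintype K] {α δ : Q.V → ℕ}

theorem sq_ne_zero : sq K ≠ 0 :=
  (Real.sqrt_pos.2 (by exact_mod_cast Fintype.card_pos)).ne'

theorem sum_epairs (hδ : δ ≤ α) (mV : RepOf Q K δ) (mU : RepOf Q K (α - δ)) :
    ∑ mW : RepOf Q K α, (epairs mU.toRep mV.toRep mW.toRep : ℝ) =
      glcard Q K α * sq K ^ (-2 * eform Q (α - δ) δ) := by
  have hcount := card_sigma_exactPairs_mul hδ mV mU
  rw [Nat.card_sigma] at hcount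
  have heform : eform Q (α - δ) δ =
      ((∑ v, (α v - δ v) * δ v : ℕ) : ℤ) -
        ((∑ e : Q.E, (α (Q.src e) - δ (Q.src e)) * δ (Q.tgt e) : ℕ) : ℤ) := by
    simp [eform]
  have hq : (Fintype.card K : ℝ) ≠ 0 := by exact_mod_cast Fintype.card_ne_zero
  rw [heform, show ∀ a b : ℤ, -2 * (a - b) = 2 * (b - a) by intros; ring, sq_zpow_two_mul,
    zpow_sub₀ hq, zpow_natCast, zpow_natCast, ← mul_div_assoc, eq_div_iff (pow_ne_zero _ hq),
    ← Nat.card_eq_fintype_card]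
  exact_mod_cast hcount

noncomputable def weightedCount (h : Rep Q K → ℚ) (β : Q.V → ℕ) : ℝ :=
  ∑ m : RepOf Q K β, (h m.toRep : ℝ) / glcard Q K β

theorem intmap_apply (h : Rep Q K → ℚ) (β : Q.V → ℕ) :
    intmap Q h β = sq K ^ eform Q β β * weightedCount h β := by
  rw [intmap, finsum_eq_sum_of_fintype, weightedCount]

theorem cast_hmul_apply (h₁ h₂ : Rep Q K → ℚ) (mW : RepOf Q K α) :
    (hmul h₁ h₂ mW.toRep : ℝ) =
      ∑ δ ∈ Finset.Iic α, ∑ mV : RepOf Q K δ, ∑ mU : RepOf Q K (α - δ),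
        (h₁ mU.toRep : ℝ) * h₂ mV.toRep * epairs mU.toRep mV.toRep mW.toRep /
          (glcard Q K δ * glcard Q K (α - δ)) := by
  simp only [hmul, finsum_eq_sum_of_fintype]
  rw [finsum_le_eq_sum_Iic]
  push_cast
  rfl

theorem sum_hmul_summand_div_glcard (h₁ h₂ : Rep Q K → ℚ) (hδ : δ ≤ α) :
    ∑ mW : RepOf Q K α, ∑ mV : RepOf Q K δ, ∑ mU : RepOf Q K (α - δ),
        (h₁ mU.toRep : ℝ) * h₂ mV.toRep * epairs mU.toRep mV.toRep mW.toRep /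
          (glcard Q K δ * glcard Q K (α - δ)) / glcard Q K α =
      sq K ^ (-2 * eform Q (α - δ) δ) * weightedCount h₁ (α - δ) * weightedCount h₂ δ := by
  have hgl : (glcard Q K α : ℝ) ≠ 0 := by exact_mod_cast (glcard_pos α).ne'
  calc _ = ∑ mV : RepOf Q K δ, ∑ mU : RepOf Q K (α - δ),
        (h₁ mU.toRep : ℝ) * h₂ mV.toRep / (glcard Q K δ * glcard Q K (α - δ)) *
          (∑ mW : RepOf Q K α, (epairs mU.toRep mV.toRep mW.toRep : ℝ)) / glcard Q K α := by
        rw [Finset.sum_comm]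
        refine Finset.sum_congr rfl fun mV _ => ?_
        rw [Finset.sum_comm]
        refine Finset.sum_congr rfl fun mU _ => ?_
        rw [Finset.mul_sum, Finset.sum_div]
        congr! 1
        ring
    _ = ∑ mV : RepOf Q K δ, ∑ mU : RepOf Q K (α - δ),
        sq K ^ (-2 * eform Q (α - δ) δ) * ((h₁ mU.toRep : ℝ) / glcard Q K (α - δ)) *
          ((h₂ mV.toRep : ℝ) / glcard Q K δ) := by
        simp_rw [sum_epairs hδ]
        refine Finset.sum_congr rfl fun _ _ => Finset.sum_congr rfl fun _ _ => ?_
        field_simp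
    _ = _ := by simp_rw [weightedCount, Finset.mul_sum, Finset.sum_mul]

theorem intmap_hmul_apply (h₁ h₂ : Rep Q K → ℚ) (α : Q.V → ℕ) :
    intmap Q (hmul h₁ h₂) α = ∑ δ ∈ Finset.Iic α,
      sq K ^ (eform Q α α - 2 * eform Q (α - δ) δ) *
        weightedCount h₁ (α - δ) * weightedCount h₂ δ := by
  rw [intmap_apply, weightedCount]
  simp_rw [cast_hmul_apply, Finset.sum_div]
  rw [Finset.sum_comm, Finset.mul_sum]
  refine Finset.sum_congr rfl fun δ hδ => ?_
  rw [sum_hmul_summand_div_glcard h₁ h₂ (Finset.mem_Iic.1 hδ), sub_eq_add_neg,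
    zpow_add₀ sq_ne_zero, neg_mul_eq_neg_mul]
  ring

theorem intmap_hmul (h₁ h₂ : Rep Q K → ℚ) :
    intmap Q (hmul h₁ h₂) = qmul Q K (intmap Q h₁) (intmap Q h₂) := by
  funext α
  rw [intmap_hmul_apply, qmul_apply]
  refine Finset.sum_nbij' (α - ·) (α - ·) (fun _ _ => Finset.mem_Iic.2 tsub_le_self)
    (fun _ _ => Finset.mem_Iic.2 tsub_le_self)
    (fun δ hδ => tsub_tsub_cancel_of_le (Finset.mem_Iic.1 hδ))
    (fun β hβ => tsub_tsub_cancel_of_le (Finset.mem_Iic.1 hβ)) fun δ hδ => ?_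
  have hδ : δ ≤ α := Finset.mem_Iic.1 hδ
  have hsplit := eform_add_add (α - δ) δ
  rw [tsub_add_cancel_of_le hδ] at hsplit
  have hexp : eform Q α α - 2 * eform Q (α - δ) δ =
      -aform Q (α - δ) δ + eform Q (α - δ) (α - δ) + eform Q δ δ := by
    rw [aform]
    linarith
  simp only [intmap_apply, tsub_tsub_cancel_of_le hδ]
  rw [hexp, zpow_add₀ sq_ne_zero, zpow_add₀ sq_ne_zero]
  ring

theorem weightedCount_hone (γ : Q.V → ℕ) :
    weightedCount (hone : Rep Q K → ℚ) γ = if γ = 0 then 1 else 0 := by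
  split_ifs with hγ
  · subst hγ
    have : Subsingleton (RepOf Q K 0) :=
      ⟨fun _ _ => funext fun _ => LinearMap.ext fun z => by
        rw [show z = 0 from funext fun i => Fin.elim0 i, map_zero, map_zero]⟩
    have hgl : glcard Q K 0 = 1 := Finset.prod_eq_one fun v _ => by
      simp only [Pi.zero_apply]
      exact Nat.card_of_subsingleton (LinearEquiv.refl K _)
    rw [weightedCount, Fintype.sum_subsingleton _ (show RepOf Q K 0 from fun _ => 0), hgl]
    simp [hone, RepOf.toRep, ← Pi.zero_def]
  · refine Finset.sum_eq_zero fun m _ => ?_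
    simp [hone, RepOf.toRep, ← Pi.zero_def, hγ]

theorem intmap_hone : intmap Q (hone : Rep Q K → ℚ) = qone Q := by
  funext γ
  rw [intmap_apply, weightedCount_hone, qone]
  split_ifs with hγ
  · simp [hγ, eform]
  · simp

end Integration

theorem stmt5_general (Q : FQuiver) (K : Type) [Field K] [Fintype K]
    (h₁ h₂ : Rep Q K → ℚ) :
    intmap Q (hmul h₁ h₂) = qmul Q K (intmap Q h₁) (intmap Q h₂) ∧
    intmap Q (hone : Rep Q K → ℚ) = qone Q :=
  ⟨intmap_hmul h₁ h₂, intmap_hone⟩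

/-- The map `∫ : H(Q) → X_{(Q)}`, `[M] ↦ q^{⟨α,α⟩/2} x^α / a_M`
(where `a_M = |Aut M|`, `α = dim M`), is an algebra homomorphism onto the quantum
Laurent series algebra with `x^β x^γ = q^{-(β,γ)/2} x^{β+γ}`. -/
theorem stmt5 (Q : FQuiver) (K : Type) [Field K] [Fintype K]
    (h₁ h₂ : Rep Q K → ℚ) (hh₁ : IsoInvariant h₁) (hh₂ : IsoInvariant h₂) :
    intmap Q (hmul h₁ h₂) = qmul Q K (intmap Q h₁) (intmap Q h₂) ∧
    intmap Q (hone : Rep Q K → ℚ) = qone Q :=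
  stmt5_general Q K h₁ h₂

end QP
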